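/- arXiv:2112.07700 — 3 statements merged into one kernel-verified Lean document; each statement's English description precedes it below -/
import Mathlib

section
/- Let q, y, b be positive integers, g = gcd(q,y), and let a be an integer with gcd(a,q) = 1 and gcd(b,g) = 1. Set S := Σ_{r : 1 ≤ r ≤ q, gcd(r,q) = 1, r ≡ b (mod g)} e(ra/q). Then: (i) S = 0 if 1 < g < q and gcd(g, q/g) > 1; (ii) if 1 ≤ g < q and gcd(g, q/g) = 1, then S = μ(q/g) · e(abt/g), where ḡ denotes a multiplicative inverse of g modulo q/g and t is the integer determined by 1 − gḡ = (q/g)t; (iii) if g = q, then S = e(ab/q). -/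
/-!
Reduce to residues `0 ≤ r < q`. If a prime `p` divides both `g` and `q/g`, then `p² ∣ q`, so
the shift `r ↦ r + q/p` preserves both coprimality to `q` and the class of `r` mod `g`, while
it multiplies `e(ra/q)` by `e(a/p) ≠ 1`; hence `S = 0`. If `gcd(g, q/g) = 1`, write
`1 = g ḡ + (q/g) t`, so that `e(ra/q) = e(r a ḡ/(q/g)) e(r a t/g)`. On the progression the
second factor is `e(abt/g)`, and by the Chinese remainder theorem `r ↦ r mod q/g` maps the
progression bijectively onto the reduced residues mod `q/g`, which leaves the Ramanujan sum
`c_{q/g}(a ḡ) = μ(q/g)`. If `g = q`, the progression consists of the single residue `b`.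
-/

noncomputable section

/-- `e(t) = e^{2πit}`. -/
def e2pi (t : ℝ) : ℂ := Complex.exp (2 * Real.pi * Complex.I * t)

/-- The sum `S = Σ_{1 ≤ r ≤ q, gcd(r,q)=1, r ≡ b (mod g)} e(ra/q)`, with `g = gcd(q,y)`. -/
def Ssum (q y b : ℕ) (a : ℤ) : ℂ :=
  ∑ r ∈ (Finset.Icc 1 q).filter
      (fun r : ℕ => Nat.gcd r q = 1 ∧ r % Nat.gcd q y = b % Nat.gcd q y),
    e2pi (((r : ℤ) * a : ℤ) / (q : ℝ))

open Finset ArithmeticFunction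
open scoped ArithmeticFunction.Moebius

theorem Nat.coprime_add_iff_of_dvd_mul_self {r c q : ℕ} (h : q ∣ c * c) :
    (r + c).Coprime q ↔ r.Coprime q := by
  rw [← not_iff_not, Nat.Prime.not_coprime_iff_dvd, Nat.Prime.not_coprime_iff_dvd]
  exact exists_congr fun p => and_congr_right fun hp => and_congr_left fun hpq =>
    Nat.dvd_add_left ((hp.dvd_mul.mp (hpq.trans h)).elim id id)

theorem Function.Periodic.sum_range_add {M : Type*} [AddCommMonoid M] {f : ℕ → M} {q : ℕ}
    (hf : Function.Periodic f q) (c : ℕ) :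
    ∑ r ∈ range q, f (r + c) = ∑ r ∈ range q, f r := by
  induction c generalizing f with
  | zero => rfl
  | succ c ih =>
    simp only [← add_assoc, ih (hf.add_const 1)]
    rcases q with _ | n
    · simp
    rw [sum_range_succ, sum_range_succ' f, show f (n + 1) = f 0 by simpa using hf 0]

lemma sum_range_filter_dvd {M : Type*} [AddCommMonoid M] {d m : ℕ} (hd : d ∣ m)
    (f : ℕ → M) :
    ∑ s ∈ range m with d ∣ s, f s = ∑ j ∈ range (m / d), f (d * j) := by
  rcases Nat.eq_zero_or_pos d with rfl | hd0
  · simp [zero_dvd_iff.mp hd]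
  rw [← sum_image fun x _ y _ h => Nat.eq_of_mul_eq_mul_left hd0 h]
  congr 1
  ext s
  simp only [mem_filter, mem_range, mem_image]
  constructor
  · rintro ⟨hs, j, rfl⟩
    exact ⟨j, by rw [Nat.lt_div_iff_mul_lt' hd]; linarith [mul_comm j d], rfl⟩
  · rintro ⟨j, hj, rfl⟩
    exact ⟨by rw [Nat.lt_div_iff_mul_lt' hd] at hj; linarith [mul_comm j d], dvd_mul_right d j⟩

lemma ite_coprime_eq_sum_moebius {m : ℕ} (hm : m ≠ 0) (s : ℕ) :
    (if s.Coprime m then 1 else 0 : ℤ) = ∑ d ∈ m.divisors with d ∣ s, μ d := by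
  have : {d ∈ m.divisors | d ∣ s} = (s.gcd m).divisors := by
    ext d
    simp [Nat.dvd_gcd_iff, hm, Nat.gcd_eq_zero_iff, and_comm]
  rw [this, ← coe_mul_zeta_apply, moebius_mul_coe_zeta, one_apply]

lemma sum_coprime_modEq_comp_mod {M : Type*} [AddCommMonoid M] {g m b : ℕ} (hg : g ≠ 0)
    (hgm : g.Coprime m) (hb : b.Coprime g) (f : ℕ → M) :
    ∑ r ∈ range (g * m) with r.Coprime (g * m) ∧ r % g = b % g, f (r % m) =
      ∑ s ∈ range m with s.Coprime m, f s := by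
  rcases eq_or_ne m 0 with rfl | hm
  · simp
  let crt (s : ℕ) := Nat.chineseRemainder hgm b s
  refine sum_nbij' (· % m) (fun s => crt s) ?_ ?_ ?_ ?_ fun _ _ => rfl
  · intro r hr
    simp only [mem_filter, mem_range] at hr ⊢
    exact ⟨Nat.mod_lt r (Nat.pos_of_ne_zero hm),
      (Nat.mod_modEq r m).gcd_eq.trans (Nat.Coprime.coprime_mul_left_right hr.2.1)⟩
  · intro s hs
    simp only [mem_filter, mem_range] at hs ⊢
    exact ⟨Nat.chineseRemainder_lt_mul hgm b s hg hm,
      Nat.Coprime.mul_right ((crt s).2.1.gcd_eq.trans hb) ((crt s).2.2.gcd_eq.trans hs.2),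
      (crt s).2.1⟩
  · intro r hr
    simp only [mem_filter, mem_range] at hr
    have hmod : crt (r % m) ≡ r [MOD g * m] := (Nat.modEq_and_modEq_iff_modEq_mul hgm).mp
      ⟨(crt _).2.1.trans hr.2.2.symm, (crt _).2.2.trans (Nat.mod_modEq r m)⟩
    rw [Nat.ModEq, Nat.mod_eq_of_lt (Nat.chineseRemainder_lt_mul hgm b _ hg hm),
      Nat.mod_eq_of_lt hr.1] at hmod
    exact hmod
  · intro s hs
    simp only [mem_filter, mem_range] at hs
    exact Eq.trans (crt s).2.2 (Nat.mod_eq_of_lt hs.1)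

lemma e2pi_add (x y : ℝ) : e2pi (x + y) = e2pi x * e2pi y := by
  rw [e2pi, e2pi, e2pi, ← Complex.exp_add]
  push_cast
  ring_nf

lemma e2pi_intCast (n : ℤ) : e2pi n = 1 := by
  rw [e2pi, ← Complex.exp_int_mul_two_pi_mul_I n]
  push_cast
  ring_nf

lemma e2pi_natCast_mul (n : ℕ) (x : ℝ) : e2pi (n * x) = e2pi x ^ n := by
  rw [e2pi, e2pi, ← Complex.exp_nat_mul]
  push_cast
  ring_nf

lemma e2pi_div_eq_of_modEq {N : ℕ} {n k : ℤ} (h : n ≡ k [ZMOD N]) :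
    e2pi (n / N) = e2pi (k / N) := by
  obtain ⟨c, hc⟩ := h.dvd
  rcases eq_or_ne N 0 with rfl | hN
  · simp_all
  have : (n : ℝ) / N = k / N + (-c : ℤ) := by
    rw [show n = k - N * c by linarith]
    push_cast
    field_simp
    ring
  rw [this, e2pi_add, e2pi_intCast, mul_one]

lemma isPrimitiveRoot_e2pi_div {N : ℕ} (hN : N ≠ 0) {u : ℤ} (hu : IsCoprime u N) :
    IsPrimitiveRoot (e2pi (u / N)) N := by
  simpa [e2pi] using Complex.isPrimitiveRoot_exp_of_isCoprime u N hN hu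

lemma sum_range_e2pi_mul_div_eq_ite (k : ℕ) {u : ℤ} (hu : IsCoprime u k) :
    ∑ j ∈ range k, e2pi (((j * u : ℤ) : ℝ) / k) = if k = 1 then 1 else 0 := by
  rcases eq_or_ne k 0 with rfl | hk
  · simp
  have hpow (j : ℕ) : e2pi (((j * u : ℤ) : ℝ) / k) = e2pi (u / k) ^ j := by
    rw [← e2pi_natCast_mul]
    push_cast
    ring_nf
  simp_rw [hpow]
  split_ifs with hk1
  · simp [hk1]
  · exact (isPrimitiveRoot_e2pi_div hk hu).geom_sum_eq_zero (by omega)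

theorem sum_range_coprime_e2pi_eq_moebius (m : ℕ) {u : ℤ} (hu : IsCoprime u m) :
    ∑ s ∈ range m with s.Coprime m, e2pi (((s * u : ℤ) : ℝ) / m) = μ m := by
  rcases eq_or_ne m 0 with rfl | hm
  · simp
  calc _ = ∑ s ∈ range m, ∑ d ∈ m.divisors with d ∣ s,
            (μ d : ℂ) * e2pi (((s * u : ℤ) : ℝ) / m) := by
          rw [sum_filter]
          refine sum_congr rfl fun s _ => ?_
          rw [← sum_mul, ← Int.cast_sum, ← ite_coprime_eq_sum_moebius hm]
          split_ifs <;> simp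
    _ = ∑ d ∈ m.divisors, (μ d : ℂ) *
            ∑ s ∈ range m with d ∣ s, e2pi (((s * u : ℤ) : ℝ) / m) := by
          simp_rw [sum_filter, mul_sum, mul_ite, mul_zero]
          exact sum_comm
    _ = ∑ d ∈ m.divisors, (μ d : ℂ) * if m / d = 1 then 1 else 0 := by
          refine sum_congr rfl fun d hd => ?_
          obtain ⟨hdm, -⟩ := Nat.mem_divisors.mp hd
          rw [sum_range_filter_dvd hdm, ← sum_range_e2pi_mul_div_eq_ite (m / d)
            (hu.of_isCoprime_of_dvd_right (Int.natCast_dvd_natCast.mpr (Nat.div_dvd_of_dvd hdm)))]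
          congr 1
          refine sum_congr rfl fun j _ => ?_
          have hd0 : (d : ℝ) ≠ 0 := by exact_mod_cast (Nat.pos_of_mem_divisors hd).ne'
          rw [Nat.cast_div hdm hd0]
          push_cast
          field_simp
    _ = μ m := by
          rw [sum_eq_single m, Nat.div_self (Nat.pos_of_ne_zero hm)]
          · simp
          · intro d hd hdm
            have : m / d ≠ 1 := fun h => hdm <| calc
              d = m / d * d := by rw [h, one_mul]
              _ = m := Nat.div_mul_cancel (Nat.dvd_of_mem_divisors hd)
            simp [this]
          · simp [hm]

lemma periodic_ite_coprime_modEq_e2pi {q g b : ℕ} (hg : g ∣ q) (a : ℤ) :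
    Function.Periodic (fun r : ℕ => if r.Coprime q ∧ r % g = b % g then
      e2pi (((r * a : ℤ) : ℝ) / q) else 0) q := by
  intro r
  have hmod : (r + q) % g = r % g := by
    obtain ⟨k, hk⟩ := hg
    rw [hk, Nat.add_mul_mod_self_left]
  have he : e2pi ((((r + q : ℕ) * a : ℤ) : ℝ) / q) = e2pi (((r * a : ℤ) : ℝ) / q) :=
    e2pi_div_eq_of_modEq (by simp [Int.ModEq, add_mul])
  simp only [Nat.coprime_add_self_left, hmod, he]

lemma Ssum_eq_sum_range (q y b : ℕ) (a : ℤ) :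
    Ssum q y b a = ∑ r ∈ range q with r.Coprime q ∧ r % q.gcd y = b % q.gcd y,
      e2pi (((r * a : ℤ) : ℝ) / q) := by
  have hf := periodic_ite_coprime_modEq_e2pi (b := b) (Nat.gcd_dvd_left q y) a
  rw [Ssum, sum_filter, sum_filter, ← hf.sum_range_add 1, ← Ico_add_one_right_eq_Icc,
    sum_Ico_eq_sum_range]
  simp only [Nat.add_sub_cancel, add_comm 1, Nat.Coprime]

theorem sum_coprime_modEq_e2pi_eq_zero_of_shift {q g b c : ℕ} {a : ℤ} (hg : g ∣ q)
    (hgc : g ∣ c) (hqc : q ∣ c * c) (hca : e2pi (((c * a : ℤ) : ℝ) / q) ≠ 1) :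
    ∑ r ∈ range q with r.Coprime q ∧ r % g = b % g, e2pi (((r * a : ℤ) : ℝ) / q) = 0 := by
  set f := fun r : ℕ =>
    if r.Coprime q ∧ r % g = b % g then e2pi (((r * a : ℤ) : ℝ) / q) else 0
  have hshift (r : ℕ) : f (r + c) = e2pi (((c * a : ℤ) : ℝ) / q) * f r := by
    have hmod : (r + c) % g = r % g := by
      obtain ⟨k, rfl⟩ := hgc
      rw [Nat.add_mul_mod_self_left]
    simp only [f, Nat.coprime_add_iff_of_dvd_mul_self hqc, hmod, mul_ite, mul_zero, ← e2pi_add]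
    congr 3
    push_cast
    ring
  have hinv : ∑ r ∈ range q, f (r + c) = ∑ r ∈ range q, f r :=
    (periodic_ite_coprime_modEq_e2pi hg a).sum_range_add c
  simp only [hshift, ← mul_sum] at hinv
  rw [sum_filter]
  by_contra hS
  exact hca ((mul_eq_right₀ hS).mp hinv)

theorem sum_coprime_modEq_e2pi_eq_zero {q g b p : ℕ} {a : ℤ} (hq : q ≠ 0) (hg : g ∣ q)
    (hp : p.Prime) (hpg : p ∣ g) (hpm : p ∣ q / g) (ha : IsCoprime a q) :
    ∑ r ∈ range q with r.Coprime q ∧ r % g = b % g, e2pi (((r * a : ℤ) : ℝ) / q) = 0 := by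
  obtain ⟨m, rfl⟩ := hg
  obtain ⟨g', rfl⟩ := hpg
  rw [Nat.mul_div_cancel_left _ (Nat.pos_of_ne_zero (left_ne_zero_of_mul hq))] at hpm
  obtain ⟨m', rfl⟩ := hpm
  have hg' : g' ≠ 0 := by rintro rfl; simp at hq
  have hm' : m' ≠ 0 := by rintro rfl; simp at hq
  have hca : e2pi ((((p * g' * m' : ℕ) * a : ℤ) : ℝ) / (p * g' * (p * m') : ℕ)) =
      e2pi (a / p) := by
    congr 1
    push_cast
    field_simp
  refine sum_coprime_modEq_e2pi_eq_zero_of_shift (c := p * g' * m') (dvd_mul_right _ _)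
    (dvd_mul_right _ _) (Dvd.intro (g' * m') (by ring)) ?_
  rw [hca]
  refine (isPrimitiveRoot_e2pi_div hp.ne_zero ?_).ne_one hp.one_lt
  exact ha.of_isCoprime_of_dvd_right
    (Int.natCast_dvd_natCast.mpr (Dvd.intro (g' * (p * m')) (by ring)))

theorem sum_coprime_modEq_self_e2pi_eq {q b : ℕ} (hq : q ≠ 0) (hb : b.Coprime q) (a : ℤ) :
    ∑ r ∈ range q with r.Coprime q ∧ r % q = b % q, e2pi (((r * a : ℤ) : ℝ) / q) =
      e2pi (((a * b : ℤ) : ℝ) / q) := by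
  have : {r ∈ range q | r.Coprime q ∧ r % q = b % q} = {b % q} := by
    ext r
    simp only [mem_filter, mem_range, mem_singleton]
    constructor
    · rintro ⟨hr, -, hrb⟩
      rw [← hrb, Nat.mod_eq_of_lt hr]
    · rintro rfl
      exact ⟨Nat.mod_lt b (Nat.pos_of_ne_zero hq), (Nat.mod_modEq b q).gcd_eq.trans hb,
        Nat.mod_mod b q⟩
  rw [this, sum_singleton]
  exact e2pi_div_eq_of_modEq (by rw [mul_comm]; exact (Int.mod_modEq b q).mul_left a)

lemma e2pi_div_mul_eq_mul {g m : ℕ} (hg : g ≠ 0) (hm : m ≠ 0) {gbar t : ℤ}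
    (h : g * gbar + m * t = 1) (z : ℤ) :
    e2pi (z / (g * m : ℕ)) =
      e2pi (((z * gbar : ℤ) : ℝ) / m) * e2pi (((z * t : ℤ) : ℝ) / g) := by
  have h' : (g * gbar + m * t : ℝ) = 1 := by exact_mod_cast h
  have hsplit :
      (z : ℝ) / (g * m : ℕ) = ((z * gbar : ℤ) : ℝ) / m + ((z * t : ℤ) : ℝ) / g := by
    push_cast
    field_simp
    rw [h', mul_one]
  rw [hsplit, e2pi_add]

theorem sum_coprime_modEq_e2pi_eq_moebius_mul {g m b : ℕ} {a gbar t : ℤ} (hg : g ≠ 0)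
    (hm : m ≠ 0) (hb : b.Coprime g) (ha : IsCoprime a m) (h : g * gbar + m * t = 1) :
    ∑ r ∈ range (g * m) with r.Coprime (g * m) ∧ r % g = b % g,
      e2pi (((r * a : ℤ) : ℝ) / (g * m : ℕ)) =
        μ m * e2pi (((a * b * t : ℤ) : ℝ) / g) := by
  have hgm : g.Coprime m := Nat.isCoprime_iff_coprime.mp ⟨gbar, t, by linear_combination h⟩
  have hu : IsCoprime (a * gbar) m := ha.mul_left ⟨g, t, by linear_combination h⟩
  calc _ = ∑ r ∈ range (g * m) with r.Coprime (g * m) ∧ r % g = b % g,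
          e2pi ((((r % m : ℕ) * (a * gbar) : ℤ) : ℝ) / m) *
            e2pi (((a * b * t : ℤ) : ℝ) / g) := by
        refine sum_congr rfl fun r hr => ?_
        rw [mem_filter] at hr
        rw [e2pi_div_mul_eq_mul hg hm h]
        congr 1
        · refine e2pi_div_eq_of_modEq ?_
          rw [mul_assoc]
          exact ((Int.natCast_modEq_iff.mpr (Nat.mod_modEq r m)).mul_right _).symm
        · refine e2pi_div_eq_of_modEq ?_
          have := (Int.natCast_modEq_iff.mpr hr.2.2).mul_right (a * t)
          convert this using 1 <;> ring
    _ = μ m * e2pi (((a * b * t : ℤ) : ℝ) / g) := by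
        rw [← sum_mul, sum_coprime_modEq_comp_mod hg hgm hb
          (fun s => e2pi (((s * (a * gbar) : ℤ) : ℝ) / m)),
          sum_range_coprime_e2pi_eq_moebius m hu]

theorem ramanujan_sum_on_progression_general (q y b : ℕ) (hq : 0 < q)
    (a : ℤ) (ha : Int.gcd a q = 1) (hbg : Nat.gcd b (Nat.gcd q y) = 1) :
    ((1 < Nat.gcd q y ∧ Nat.gcd q y < q ∧ 1 < Nat.gcd (Nat.gcd q y) (q / Nat.gcd q y)) →
        Ssum q y b a = 0) ∧
    ((Nat.gcd q y < q ∧ Nat.gcd (Nat.gcd q y) (q / Nat.gcd q y) = 1) →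
        ∀ gbar t : ℤ,
          Int.ModEq ((q / Nat.gcd q y : ℕ) : ℤ) ((Nat.gcd q y : ℤ) * gbar) 1 →
          1 - (Nat.gcd q y : ℤ) * gbar = ((q / Nat.gcd q y : ℕ) : ℤ) * t →
          Ssum q y b a =
            ((ArithmeticFunction.moebius (q / Nat.gcd q y) : ℤ) : ℂ) *
              e2pi (((a * (b : ℤ) * t : ℤ) : ℝ) / (Nat.gcd q y : ℝ))) ∧
    (Nat.gcd q y = q →
        Ssum q y b a = e2pi (((a * (b : ℤ) : ℤ) : ℝ) / (q : ℝ))) := by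
  have ha' : IsCoprime a q := Int.isCoprime_iff_gcd_eq_one.mpr ha
  rw [Ssum_eq_sum_range]
  set g := Nat.gcd q y
  have hg : g ∣ q := Nat.gcd_dvd_left q y
  refine ⟨fun ⟨_, _, hgm⟩ => ?_, fun _ gbar t _ ht => ?_, fun hgq => ?_⟩
  · obtain ⟨p, hp, hpgm⟩ := Nat.exists_prime_and_dvd hgm.ne'
    exact sum_coprime_modEq_e2pi_eq_zero hq.ne' hg hp (hpgm.trans (Nat.gcd_dvd_left _ _))
      (hpgm.trans (Nat.gcd_dvd_right _ _)) ha'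
  · set m := q / g
    have hqm : g * m = q := Nat.mul_div_cancel' hg
    have hm : m ≠ 0 := by rintro h; rw [h, mul_zero] at hqm; omega
    have hg0 : g ≠ 0 := by rintro h; rw [h, zero_mul] at hqm; omega
    rw [← hqm]
    exact sum_coprime_modEq_e2pi_eq_moebius_mul (gbar := gbar) (t := t) hg0 hm hbg
      (ha'.of_isCoprime_of_dvd_right (Int.natCast_dvd_natCast.mpr (Nat.div_dvd_of_dvd hg)))
      (by linear_combination -ht)
  · rw [hgq] at hbg ⊢
    exact sum_coprime_modEq_self_e2pi_eq hq.ne' hbg a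

theorem ramanujan_sum_on_progression (q y b : ℕ) (hq : 0 < q) (hy : 0 < y) (hb : 0 < b)
    (a : ℤ) (ha : Int.gcd a q = 1) (hbg : Nat.gcd b (Nat.gcd q y) = 1) :
    ((1 < Nat.gcd q y ∧ Nat.gcd q y < q ∧ 1 < Nat.gcd (Nat.gcd q y) (q / Nat.gcd q y)) →
        Ssum q y b a = 0) ∧
    ((Nat.gcd q y < q ∧ Nat.gcd (Nat.gcd q y) (q / Nat.gcd q y) = 1) →
        ∀ gbar t : ℤ,
          Int.ModEq ((q / Nat.gcd q y : ℕ) : ℤ) ((Nat.gcd q y : ℤ) * gbar) 1 →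
          1 - (Nat.gcd q y : ℤ) * gbar = ((q / Nat.gcd q y : ℕ) : ℤ) * t →
          Ssum q y b a =
            ((ArithmeticFunction.moebius (q / Nat.gcd q y) : ℤ) : ℂ) *
              e2pi (((a * (b : ℤ) * t : ℤ) : ℝ) / (Nat.gcd q y : ℝ))) ∧
    (Nat.gcd q y = q →
        Ssum q y b a = e2pi (((a * (b : ℤ) : ℤ) : ℝ) / (q : ℝ))) :=
  ramanujan_sum_on_progression_general q y b hq a ha hbg

end
end

section
/- Let p be a prime, y ≥ 1 an integer with p ∤ y, b any integer, t ≥ 1 an integer, and x_1 ≥ x_2 ≥ … ≥ x_t ≥ 0 integers. Then Σ_{n = 1}^{p^{x_1}} ∏_{j=1}^{t} gcd(p^{x_j}, ny + b) ≤ p^{x_1 t} · ∏_{j=1}^{t} (x_j + 1). -/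
/-!
Every factor is at most `g = gcd(p^{x₁}, ny + b)`, so each summand is at most `g^t`, and
`g^t ≤ ∑_{i ≤ x₁, p^i ∣ ny + b} p^{it}`. Exchanging the sums, the coefficient of `p^{it}` counts
the `n ≤ p^{x₁}` with `p^i ∣ ny + b`; as `y` is invertible mod `p^i` these form a single residue
class mod `p^i`, so there are at most `p^{x₁ - i}` of them. Each of the `x₁ + 1` terms is then at
most `p^{x₁ t}`.
-/

open Finset

theorem Nat.card_le_of_modEq_of_subset_Icc {s : Finset ℕ} {m N : ℕ} (hs : s ⊆ Icc 1 (m * N))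
    (hmod : ∀ a ∈ s, ∀ b ∈ s, a ≡ b [MOD m]) : #s ≤ N := by
  rw [← card_range N]
  refine card_le_card_of_injOn (fun n => (n - 1) / m) (fun n hn => ?_) fun a ha b hb hab => ?_
  · obtain ⟨hn1, hnm⟩ := mem_Icc.mp (hs hn)
    have hm : 0 < m := Nat.pos_of_mul_pos_right (by omega : 0 < m * N)
    simp only [coe_range, Set.mem_Iio]
    rw [Nat.div_lt_iff_lt_mul hm]
    grind
  · have ha1 := (mem_Icc.mp (hs ha)).1
    have hb1 := (mem_Icc.mp (hs hb)).1
    have hrem : (a - 1) % m = (b - 1) % m := Nat.ModEq.add_right_cancel' 1 <| by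
      rw [Nat.sub_add_cancel ha1, Nat.sub_add_cancel hb1]
      exact hmod a ha b hb
    have hquot : (a - 1) / m = (b - 1) / m := hab
    have : a - 1 = b - 1 := by
      rw [← Nat.div_add_mod (a - 1) m, ← Nat.div_add_mod (b - 1) m, hquot, hrem]
    omega

theorem Int.natCast_modEq_of_dvd_mul_add {m n₁ n₂ : ℕ} {y b : ℤ} (hy : IsCoprime (m : ℤ) y)
    (h₁ : (m : ℤ) ∣ n₁ * y + b) (h₂ : (m : ℤ) ∣ n₂ * y + b) : n₁ ≡ n₂ [MOD m] := by
  rw [← Int.natCast_modEq_iff]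
  refine (Int.modEq_of_dvd (hy.dvd_of_dvd_mul_right ?_)).symm
  have := dvd_sub h₁ h₂
  rwa [add_sub_add_right_eq_sub, ← sub_mul] at this

theorem card_filter_dvd_mul_add_le (m N : ℕ) {y : ℤ} (hy : IsCoprime (m : ℤ) y) (b : ℤ) :
    #{n ∈ Icc 1 (m * N) | (m : ℤ) ∣ (n : ℕ) * y + b} ≤ N :=
  Nat.card_le_of_modEq_of_subset_Icc (filter_subset _ _) fun _ h₁ _ h₂ =>
    Int.natCast_modEq_of_dvd_mul_add hy (mem_filter.mp h₁).2 (mem_filter.mp h₂).2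

theorem Int.exists_gcd_prime_pow_eq {p : ℕ} (hp : p.Prime) (X : ℕ) (c : ℤ) :
    ∃ k ≤ X, Int.gcd ((p : ℤ) ^ X) c = p ^ k ∧ (p : ℤ) ^ k ∣ c := by
  have hdvd : Int.gcd ((p : ℤ) ^ X) c ∣ p ^ X := by exact_mod_cast Int.gcd_dvd_left ((p : ℤ) ^ X) c
  obtain ⟨k, hk, hgcd⟩ := (Nat.dvd_prime_pow hp).mp hdvd
  refine ⟨k, hk, hgcd, ?_⟩
  exact_mod_cast hgcd ▸ Int.gcd_dvd_right ((p : ℤ) ^ X) c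

theorem Int.gcd_pow_left_le_of_le {p : ℤ} (hp : p ≠ 0) {a X : ℕ} (h : a ≤ X) (c : ℤ) :
    Int.gcd (p ^ a) c ≤ Int.gcd (p ^ X) c :=
  Nat.le_of_dvd (Int.gcd_pos_of_ne_zero_left c (pow_ne_zero X hp)) <|
    Int.dvd_gcd ((Int.gcd_dvd_left _ c).trans (pow_dvd_pow p h)) (Int.gcd_dvd_right _ c)

theorem pow_gcd_prime_pow_le_sum {p : ℕ} (hp : p.Prime) (X t : ℕ) (c : ℤ) :
    Int.gcd ((p : ℤ) ^ X) c ^ t ≤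
      ∑ k ∈ range (X + 1), if (p : ℤ) ^ k ∣ c then p ^ (k * t) else 0 := by
  obtain ⟨k, hk, hgcd, hdvd⟩ := Int.exists_gcd_prime_pow_eq hp X c
  calc Int.gcd ((p : ℤ) ^ X) c ^ t = if (p : ℤ) ^ k ∣ c then p ^ (k * t) else 0 := by
        rw [if_pos hdvd, hgcd, ← pow_mul]
    _ ≤ _ := single_le_sum (f := fun k => if (p : ℤ) ^ k ∣ c then p ^ (k * t) else 0)
        (fun _ _ => Nat.zero_le _) (mem_range.mpr (Nat.lt_succ_of_le hk))

theorem sum_gcd_prime_pow_pow_le {p : ℕ} (hp : p.Prime) {y : ℤ} (hy : IsCoprime (p : ℤ) y)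
    (b : ℤ) (X : ℕ) {t : ℕ} (ht : 1 ≤ t) :
    ∑ n ∈ Icc 1 (p ^ X), Int.gcd ((p : ℤ) ^ X) (n * y + b) ^ t ≤ (X + 1) * p ^ (X * t) := by
  calc ∑ n ∈ Icc 1 (p ^ X), Int.gcd ((p : ℤ) ^ X) (n * y + b) ^ t
      ≤ ∑ n ∈ Icc 1 (p ^ X), ∑ k ∈ range (X + 1),
          if (p : ℤ) ^ k ∣ n * y + b then p ^ (k * t) else 0 :=
        sum_le_sum fun n _ => pow_gcd_prime_pow_le_sum hp X t _
    _ = ∑ k ∈ range (X + 1), #{n ∈ Icc 1 (p ^ X) | (p : ℤ) ^ k ∣ (n : ℕ) * y + b} * p ^ (k * t) := by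
        rw [sum_comm]
        simp only [← sum_filter, sum_const, smul_eq_mul]
    _ ≤ ∑ _k ∈ range (X + 1), p ^ (X * t) := sum_le_sum fun k hk => by
        obtain ⟨d, rfl⟩ := Nat.exists_eq_add_of_le (Nat.lt_succ_iff.mp (mem_range.mp hk))
        have hcount : #{n ∈ Icc 1 (p ^ (k + d)) | (p : ℤ) ^ k ∣ (n : ℕ) * y + b} ≤ p ^ d := by
          simpa [pow_add] using card_filter_dvd_mul_add_le (p ^ k) (p ^ d) (hy.pow_left) b
        calc _ ≤ p ^ d * p ^ (k * t) := Nat.mul_le_mul_right _ hcount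
          _ = p ^ (d + k * t) := by rw [pow_add]
          _ ≤ p ^ ((k + d) * t) := Nat.pow_le_pow_right hp.pos (by nlinarith)
    _ = (X + 1) * p ^ (X * t) := by rw [sum_const, card_range, smul_eq_mul]

theorem prime_power_gcd_sum_general (p : ℕ) (hp : p.Prime) (y : ℕ) (hpy : ¬ p ∣ y)
    (b : ℤ) (t : ℕ) (ht : 1 ≤ t) (x : ℕ → ℕ) (hx : ∀ i j, i ≤ j → j < t → x j ≤ x i) :
    ∑ n ∈ Finset.Icc 1 (p ^ x 0),
        ∏ j ∈ Finset.range t, Int.gcd ((p : ℤ) ^ x j) ((n : ℤ) * (y : ℤ) + b) ≤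
      p ^ (x 0 * t) * ∏ j ∈ Finset.range t, (x j + 1) := by
  have hcop : IsCoprime (p : ℤ) y := ((Nat.Prime.coprime_iff_not_dvd hp).mpr hpy).isCoprime
  have hp0 : (p : ℤ) ≠ 0 := by exact_mod_cast hp.ne_zero
  calc ∑ n ∈ Icc 1 (p ^ x 0), ∏ j ∈ range t, Int.gcd ((p : ℤ) ^ x j) (n * y + b)
      ≤ ∑ n ∈ Icc 1 (p ^ x 0), Int.gcd ((p : ℤ) ^ x 0) (n * y + b) ^ t :=
        sum_le_sum fun n _ => (prod_le_pow_card _ _ _ fun j hj =>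
          Int.gcd_pow_left_le_of_le hp0 (hx 0 j (Nat.zero_le j) (mem_range.mp hj)) _).trans_eq
            (by rw [card_range])
    _ ≤ (x 0 + 1) * p ^ (x 0 * t) := sum_gcd_prime_pow_pow_le hp hcop b (x 0) ht
    _ ≤ p ^ (x 0 * t) * ∏ j ∈ range t, (x j + 1) := by
        rw [mul_comm]
        exact Nat.mul_le_mul_left _
          (single_le_prod' (f := fun j => x j + 1) (fun _ _ => Nat.le_add_left 1 _)
            (mem_range.mpr ht))

theorem prime_power_gcd_sum (p : ℕ) (hp : p.Prime) (y : ℕ) (hy : 1 ≤ y) (hpy : ¬ p ∣ y)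
    (b : ℤ) (t : ℕ) (ht : 1 ≤ t) (x : ℕ → ℕ) (hx : ∀ i j, i ≤ j → j < t → x j ≤ x i) :
    ∑ n ∈ Finset.Icc 1 (p ^ x 0),
        ∏ j ∈ Finset.range t, Int.gcd ((p : ℤ) ^ x j) ((n : ℤ) * (y : ℤ) + b) ≤
      p ^ (x 0 * t) * ∏ j ∈ Finset.range t, (x j + 1) :=
  prime_power_gcd_sum_general p hp y hpy b t ht x hx
end

section
/- For every ε > 0 and every integer t ≥ 1 there is a constant C = C(ε,t) > 0 such that for all integers y ≥ 1 and b with gcd(b,y) = 1, every integer Q ≥ 1, and every tuple (q_1, …, q_t) of integers in [1,Q] with gcd(q_j, y) = 1 for all j, one has Σ_{n ≤ L} ∏_{j=1}^{t} gcd(q_j, ny + b) ≤ C · Q^{t+ε}, where L = lcm(q_1, …, q_t). -/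
/-!
Comparing `p`-adic valuations, `(∏ j, gcd (q j) m) * L ∣ (∏ j, q j) * gcd L m` for
`L = lcm q`: an index `j` of maximal valuation absorbs the factor `L`. As `L` is coprime to
`y`, a divisor `d ∣ L` divides `n * y + b` for at most `L / d` of the `n ∈ [1, L]`, so bounding
`gcd L m` by the sum of the divisors of `L` dividing `m` gives
`∑ n ∈ [1, L], gcd L (n * y + b) ≤ τ(L) * L`. Hence the sum in question is at most
`τ(L) * ∏ j, q j ≤ τ(L) * Q ^ t`, and the divisor bound `τ(L) ≪ L ^ (ε / t) ≤ Q ^ ε` concludes.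
-/

open Finset

theorem succ_pow_le_two_pow_sq_mul_two_pow {k : ℕ} (hk : 0 < k) (a : ℕ) :
    (a + 1) ^ k ≤ 2 ^ (k ^ 2) * 2 ^ a := by
  have hsucc : a + 1 ≤ 2 ^ k * 2 ^ (a / k) := calc
    a + 1 ≤ k * (a / k + 1) := by nlinarith [Nat.lt_div_mul_add (a := a) hk]
    _ ≤ 2 ^ k * 2 ^ (a / k) :=
      Nat.mul_le_mul Nat.lt_two_pow_self.le Nat.lt_two_pow_self
  calc (a + 1) ^ k ≤ (2 ^ k * 2 ^ (a / k)) ^ k := Nat.pow_le_pow_left hsucc k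
    _ = 2 ^ (k ^ 2) * 2 ^ (a / k * k) := by ring
    _ ≤ 2 ^ (k ^ 2) * 2 ^ a :=
        Nat.mul_le_mul_left _ (Nat.pow_le_pow_right two_pos (Nat.div_mul_le_self a k))

theorem succ_pow_le_mul_prime_pow {k p : ℕ} (hk : 0 < k) (hp : p.Prime) (a : ℕ) :
    (a + 1) ^ k ≤ (if p < 2 ^ k then 2 ^ (k ^ 2) else 1) * p ^ a := by
  split_ifs with hpk
  · calc (a + 1) ^ k ≤ 2 ^ (k ^ 2) * 2 ^ a := succ_pow_le_two_pow_sq_mul_two_pow hk a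
      _ ≤ 2 ^ (k ^ 2) * p ^ a := by gcongr; exact hp.two_le
  · calc (a + 1) ^ k ≤ (2 ^ a) ^ k := Nat.pow_le_pow_left (Nat.lt_two_pow_self (n := a)) k
      _ = (2 ^ k) ^ a := by ring
      _ ≤ 1 * p ^ a := by rw [one_mul]; exact Nat.pow_le_pow_left (not_lt.mp hpk) a

theorem card_divisors_pow_le {k n : ℕ} (hk : 0 < k) (hn : n ≠ 0) :
    #n.divisors ^ k ≤ 2 ^ (k ^ 2 * 2 ^ k) * n := by
  have hconst : ∏ p ∈ n.primeFactors, (if p < 2 ^ k then 2 ^ (k ^ 2) else 1) ≤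
      2 ^ (k ^ 2 * 2 ^ k) := calc
    _ = (2 ^ (k ^ 2)) ^ #{p ∈ n.primeFactors | p < 2 ^ k} := by
      rw [prod_ite, prod_const, prod_const_one, mul_one]
    _ ≤ (2 ^ (k ^ 2)) ^ 2 ^ k := by
      gcongr
      · exact Nat.one_le_two_pow
      · simpa using card_le_card (s := {p ∈ n.primeFactors | p < 2 ^ k}) (t := range (2 ^ k))
          (fun p hp => mem_range.mpr (mem_filter.mp hp).2)
    _ = 2 ^ (k ^ 2 * 2 ^ k) := by ring
  calc #n.divisors ^ k = ∏ p ∈ n.primeFactors, (n.factorization p + 1) ^ k := by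
        rw [Nat.card_divisors hn, prod_pow]
    _ ≤ ∏ p ∈ n.primeFactors,
          (if p < 2 ^ k then 2 ^ (k ^ 2) else 1) * p ^ n.factorization p :=
        prod_le_prod' fun p hp => succ_pow_le_mul_prime_pow hk (Nat.prime_of_mem_primeFactors hp) _
    _ ≤ 2 ^ (k ^ 2 * 2 ^ k) * n := by
        rw [prod_mul_distrib, ← Nat.prod_primeFactors_pow_factorization hn]
        exact Nat.mul_le_mul_right n hconst

theorem exists_card_divisors_le_mul_rpow {ε : ℝ} (hε : 0 < ε) :
    ∃ C : ℝ, 0 < C ∧ ∀ n : ℕ, n ≠ 0 → (#n.divisors : ℝ) ≤ C * (n : ℝ) ^ ε := by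
  obtain ⟨k, hkε⟩ := exists_nat_one_div_lt hε
  have hpow : ∀ n : ℕ, n ≠ 0 →
      (#n.divisors : ℝ) ^ (k + 1) ≤ 2 ^ ((k + 1) ^ 2 * 2 ^ (k + 1)) * n := fun n hn => by
    exact_mod_cast card_divisors_pow_le (Nat.add_one_pos k) hn
  set K : ℝ := 2 ^ ((k + 1) ^ 2 * 2 ^ (k + 1))
  refine ⟨K ^ ((k + 1 : ℕ) : ℝ)⁻¹, by positivity, fun n hn => ?_⟩
  calc (#n.divisors : ℝ) = ((#n.divisors : ℝ) ^ (k + 1)) ^ ((k + 1 : ℕ) : ℝ)⁻¹ :=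
        (Real.pow_rpow_inv_natCast (by positivity) k.succ_ne_zero).symm
    _ ≤ (K * n) ^ ((k + 1 : ℕ) : ℝ)⁻¹ := by gcongr; exact hpow n hn
    _ = K ^ ((k + 1 : ℕ) : ℝ)⁻¹ * (n : ℝ) ^ ((k + 1 : ℕ) : ℝ)⁻¹ := by
        rw [Real.mul_rpow (by positivity) (by positivity)]
    _ ≤ K ^ ((k + 1 : ℕ) : ℝ)⁻¹ * (n : ℝ) ^ ε := by
        gcongr
        · exact_mod_cast Nat.one_le_iff_ne_zero.mpr hn
        · push_cast; rw [← one_div]; exact hkε.le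

theorem sum_min_add_sup_le {ι : Type*} (s : Finset ι) (a : ι → ℕ) (v : ℕ) :
    ∑ j ∈ s, min (a j) v + s.sup a ≤ ∑ j ∈ s, a j + min (s.sup a) v := by
  classical
  rcases s.eq_empty_or_nonempty with rfl | hs
  · simp
  obtain ⟨j₀, hj₀, hsup⟩ := exists_mem_eq_sup s hs a
  have hrest : ∑ j ∈ s.erase j₀, min (a j) v ≤ ∑ j ∈ s.erase j₀, a j :=
    sum_le_sum fun j _ => min_le_left _ _
  rw [← add_sum_erase s _ hj₀, ← add_sum_erase s _ hj₀, hsup]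
  omega

theorem prod_gcd_mul_lcm_dvd {ι : Type*} (s : Finset ι) {q : ι → ℕ} (hq : ∀ j ∈ s, q j ≠ 0)
    (m : ℕ) : (∏ j ∈ s, (q j).gcd m) * s.lcm q ∣ (∏ j ∈ s, q j) * (s.lcm q).gcd m := by
  rcases eq_or_ne m 0 with rfl | hm
  · simp
  have hL : s.lcm q ≠ 0 := by simpa [Finset.lcm_eq_zero_iff] using hq
  have hgcd : ∀ j ∈ s, (q j).gcd m ≠ 0 := fun j hj => Nat.gcd_ne_zero_left (hq j hj)
  rw [← Nat.factorization_le_iff_dvd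
    (mul_ne_zero (prod_ne_zero_iff.mpr hgcd) hL)
    (mul_ne_zero (prod_ne_zero_iff.mpr hq) (Nat.gcd_ne_zero_left hL))]
  intro p
  simp only [Nat.factorization_mul (prod_ne_zero_iff.mpr hgcd) hL,
    Nat.factorization_mul (prod_ne_zero_iff.mpr hq) (Nat.gcd_ne_zero_left hL),
    Nat.factorization_prod hgcd, Nat.factorization_prod hq, Finsupp.add_apply,
    Finsupp.finsetSum_apply, Nat.factorization_gcd hL hm, Finsupp.inf_apply,
    Finset.factorization_lcm hq]
  rw [sum_congr rfl fun j hj => by rw [Nat.factorization_gcd (hq j hj) hm, Finsupp.inf_apply]]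
  exact sum_min_add_sup_le s _ _

theorem modEq_of_dvd_mul_add {d y n n' : ℕ} {b : ℤ} (hdy : d.Coprime y)
    (hn : (d : ℤ) ∣ n * y + b) (hn' : (d : ℤ) ∣ n' * y + b) : n ≡ n' [MOD d] := by
  rw [Nat.modEq_iff_dvd]
  refine (Nat.isCoprime_iff_coprime.mpr hdy).dvd_of_dvd_mul_right ?_
  convert dvd_sub hn' hn using 1
  ring

theorem card_filter_dvd_mul_add_le_s6 {d y L : ℕ} (b : ℤ) (hdL : d ∣ L) (hdy : d.Coprime y) :
    #((Icc 1 L).filter fun n : ℕ => (d : ℤ) ∣ n * y + b) ≤ L / d := by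
  rcases d.eq_zero_or_pos with rfl | hd
  · simp [zero_dvd_iff.mp hdL]
  rw [← card_range (L / d)]
  refine card_le_card_of_injOn (fun n => (n - 1) / d) (fun n hn => ?_) (fun n hn n' hn' hnn' => ?_)
  · simp only [coe_filter, mem_Icc, Set.mem_ofPred_eq] at hn
    simp only [coe_range, Set.mem_Iio]
    exact Nat.div_lt_div_of_lt_of_dvd hdL (by omega)
  · -- two solutions in the same block of length `d` are congruent mod `d`, hence equal
    simp only [coe_filter, mem_Icc, Set.mem_ofPred_eq] at hn hn'
    refine (modEq_of_dvd_mul_add hdy hn.2 hn'.2).eq_of_abs_lt ?_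
    have hq := Nat.div_add_mod (n - 1) d
    have hq' := Nat.div_add_mod (n' - 1) d
    have := Nat.mod_lt (n - 1) hd
    have := Nat.mod_lt (n' - 1) hd
    simp only at hnn'
    rw [hnn'] at hq
    generalize d * ((n' - 1) / d) = c at hq hq'
    rw [abs_sub_lt_iff]
    constructor <;> omega

theorem gcd_le_sum_divisors_dvd {L : ℕ} (hL : L ≠ 0) (m : ℤ) :
    L.gcd m.natAbs ≤ ∑ d ∈ L.divisors, if (d : ℤ) ∣ m then d else 0 := by
  have hmem : L.gcd m.natAbs ∈ L.divisors := Nat.mem_divisors.mpr ⟨Nat.gcd_dvd_left _ _, hL⟩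
  refine le_of_eq_of_le ?_ (single_le_sum (fun _ _ => Nat.zero_le _) hmem)
  rw [if_pos (Int.natCast_dvd.mpr (Nat.gcd_dvd_right _ _))]

theorem sum_gcd_mul_add_le {L y : ℕ} (b : ℤ) (hLy : L.Coprime y) :
    ∑ n ∈ Icc 1 L, L.gcd (n * y + b : ℤ).natAbs ≤ #L.divisors * L := by
  rcases eq_or_ne L 0 with rfl | hL
  · simp
  calc ∑ n ∈ Icc 1 L, L.gcd (n * y + b : ℤ).natAbs
      ≤ ∑ n ∈ Icc 1 L, ∑ d ∈ L.divisors, if (d : ℤ) ∣ n * y + b then d else 0 :=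
        sum_le_sum fun n _ => gcd_le_sum_divisors_dvd hL _
    _ = ∑ d ∈ L.divisors, #((Icc 1 L).filter fun n : ℕ => (d : ℤ) ∣ n * y + b) * d := by
        rw [sum_comm]
        simp only [← sum_filter, sum_const, smul_eq_mul]
    _ ≤ ∑ d ∈ L.divisors, L := sum_le_sum fun d hd => by
        have hdL := Nat.dvd_of_mem_divisors hd
        calc _ ≤ L / d * d :=
              Nat.mul_le_mul_right d (card_filter_dvd_mul_add_le_s6 b hdL (hLy.coprime_dvd_left hdL))
          _ = L := Nat.div_mul_cancel hdL
    _ = #L.divisors * L := by rw [sum_const, smul_eq_mul]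

theorem sum_prod_gcd_le_prod_mul_card_divisors {ι : Type*} (s : Finset ι) {q : ι → ℕ} {y : ℕ}
    (hq : ∀ j ∈ s, q j ≠ 0) (hqy : ∀ j ∈ s, (q j).Coprime y) (b : ℤ) :
    ∑ n ∈ Icc 1 (s.lcm q), ∏ j ∈ s, Int.gcd (q j) (n * y + b) ≤
      (∏ j ∈ s, q j) * #(s.lcm q).divisors := by
  set L := s.lcm q
  have hL : L ≠ 0 := by simpa [L, Finset.lcm_eq_zero_iff] using hq
  have hLy : L.Coprime y := (Nat.Coprime.prod_left hqy).coprime_dvd_left (lcm_dvd_prod s q)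
  refine Nat.le_of_mul_le_mul_right ?_ (Nat.pos_of_ne_zero hL)
  calc (∑ n ∈ Icc 1 L, ∏ j ∈ s, Int.gcd (q j) (n * y + b)) * L
      ≤ ∑ n ∈ Icc 1 L, (∏ j ∈ s, q j) * L.gcd (n * y + b : ℤ).natAbs := by
        rw [sum_mul]
        refine sum_le_sum fun n _ => Nat.le_of_dvd ?_ (prod_gcd_mul_lcm_dvd s hq _)
        exact Nat.mul_pos (prod_pos fun j hj => Nat.pos_of_ne_zero (hq j hj))
          (Nat.gcd_pos_of_pos_left _ (Nat.pos_of_ne_zero hL))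
    _ ≤ (∏ j ∈ s, q j) * (#L.divisors * L) := by
        rw [← mul_sum]
        exact Nat.mul_le_mul_left _ (sum_gcd_mul_add_le b hLy)
    _ = (∏ j ∈ s, q j) * #L.divisors * L := (mul_assoc _ _ _).symm

theorem gcd_sum_over_lcm_period :
    ∀ ε : ℝ, 0 < ε → ∀ t : ℕ, 1 ≤ t →
      ∃ C : ℝ, 0 < C ∧
        ∀ y : ℕ, 1 ≤ y → ∀ b : ℤ, Int.gcd b y = 1 → ∀ Q : ℕ, 1 ≤ Q →
          ∀ q : ℕ → ℕ, (∀ j < t, 1 ≤ q j ∧ q j ≤ Q ∧ Nat.gcd (q j) y = 1) →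
            ((∑ n ∈ Finset.Icc 1 ((Finset.range t).lcm q),
                ∏ j ∈ Finset.range t, Int.gcd ((q j : ℤ)) ((n : ℤ) * (y : ℤ) + b) : ℕ) : ℝ) ≤
              C * (Q : ℝ) ^ ((t : ℝ) + ε) := by
  intro ε hε t ht
  have ht' : (0 : ℝ) < t := Nat.cast_pos.mpr ht
  obtain ⟨C, hC, hdiv⟩ := exists_card_divisors_le_mul_rpow (div_pos hε ht')
  refine ⟨C, hC, fun y _ b _ Q hQ q hq => ?_⟩
  have hq0 : ∀ j ∈ range t, q j ≠ 0 := fun j hj =>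
    Nat.one_le_iff_ne_zero.mp (hq j (mem_range.mp hj)).1
  have hprod : ∏ j ∈ range t, q j ≤ Q ^ t := by
    simpa using prod_le_prod' fun j hj => (hq j (mem_range.mp hj)).2.1
  set L := (range t).lcm q
  have hLQ : L ≤ Q ^ t := (Nat.le_of_dvd (prod_pos fun j hj => Nat.pos_of_ne_zero (hq0 j hj))
    (lcm_dvd_prod _ _)).trans hprod
  have hτ : (#L.divisors : ℝ) ≤ C * (Q : ℝ) ^ ε := calc
    (#L.divisors : ℝ) ≤ C * (L : ℝ) ^ (ε / t) :=
        hdiv L (by simpa [L, Finset.lcm_eq_zero_iff] using hq0)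
    _ ≤ C * ((Q : ℝ) ^ t) ^ (ε / t) := by gcongr; exact_mod_cast hLQ
    _ = C * (Q : ℝ) ^ ε := by
        rw [← Real.rpow_natCast, ← Real.rpow_mul (by positivity), mul_div_cancel₀ _ ht'.ne']
  calc _ ≤ ((∏ j ∈ range t, q j : ℕ) : ℝ) * #L.divisors := by
        exact_mod_cast sum_prod_gcd_le_prod_mul_card_divisors _ hq0
          (fun j hj => (hq j (mem_range.mp hj)).2.2) b
    _ ≤ (Q : ℝ) ^ t * (C * (Q : ℝ) ^ ε) := by gcongr; exact_mod_cast hprod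
    _ = C * (Q : ℝ) ^ ((t : ℝ) + ε) := by
        rw [Real.rpow_add (by positivity), Real.rpow_natCast]; ring
end
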